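/- arXiv:1305.3693 — 3 statements merged into one kernel-verified Lean document; each statement's English description precedes it below -/
import Mathlib

section
/- Let Γ ⊂ ℂ be a lattice, let a be an integer, let z₀, w₀ ∈ ℂ, and let s ∈ ℂ with Re(s) > a/2 + 1. Then the Eisenstein–Kronecker–Lerch series K_a*(z₀, w₀, s; Γ) converges absolutely; that is, the function γ ↦ (conj(z₀ + γ))^a · |z₀ + γ|^{−2s} · χ_{w₀}(γ) is summable over γ ∈ Γ \ {−z₀}. -/
open Complex MeasureTheory
open scoped ComplexConjugate

/-! Since `|χ_{w₀}| = 1`, the term at `γ` has modulus `|z₀ + γ|^(a - 2 Re s)`, and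
`∑_{γ ∈ Γ} |z₀ + γ|^r` converges for `r < -2` because `Γ` has rank two. -/

noncomputable def latArea (Γ : Submodule ℤ ℂ) : ℝ :=
  ZLattice.covolume Γ volume / Real.pi

noncomputable def chi (Γ : Submodule ℤ ℂ) (w z : ℂ) : ℂ :=
  Complex.exp ((z * conj w - w * conj z) / (latArea Γ : ℂ))

lemma norm_chi (Γ : Submodule ℤ ℂ) (w z : ℂ) : ‖chi Γ w z‖ = 1 := by
  have : (z * conj w - w * conj z).re = 0 := by
    simp only [sub_re, mul_re, conj_re, conj_im]
    ring
  rw [chi, norm_exp, div_ofReal_re, this, zero_div, Real.exp_zero]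

lemma norm_conj_zpow_mul_ofReal_norm_cpow {z : ℂ} (hz : z ≠ 0) (a : ℤ) (s : ℂ) :
    ‖conj z ^ a * (‖z‖ : ℂ) ^ (-2 * s)‖ = ‖z‖ ^ ((a : ℝ) - 2 * s.re) := by
  have hz' : 0 < ‖z‖ := norm_pos_iff.mpr hz
  rw [norm_mul, norm_zpow, norm_conj, norm_cpow_eq_rpow_re_of_pos hz', ← Real.rpow_intCast,
    ← Real.rpow_add hz']
  simp [sub_eq_add_neg]

lemma ZLattice.summable_norm_add_rpow_of_lt_neg_two (Γ : Submodule ℤ ℂ) [DiscreteTopology Γ]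
    [IsZLattice ℝ Γ] (z₀ : ℂ) {r : ℝ} (hr : r < -2) :
    Summable fun γ : Γ => ‖z₀ + γ‖ ^ r := by
  have hrank : Module.finrank ℤ Γ = 2 := by
    rw [ZLattice.rank ℝ Γ, Complex.finrank_real_complex]
  simpa [sub_neg_eq_add, add_comm] using
    ZLattice.summable_norm_sub_rpow Γ r (by rw [hrank]; exact_mod_cast hr) (-z₀)

/-- The Eisenstein–Kronecker–Lerch series `K_a*(z₀, w₀, s; Γ)` converges absolutely
for `Re s > a/2 + 1`. -/
theorem eisensteinKroneckerLerch_summable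
    (Γ : Submodule ℤ ℂ) [DiscreteTopology Γ] [IsZLattice ℝ Γ]
    (a : ℤ) (z₀ w₀ : ℂ) (s : ℂ) (hs : (a : ℝ) / 2 + 1 < s.re) :
    Summable fun γ : {γ : ℂ // γ ∈ Γ ∧ γ ≠ -z₀} =>
      (conj (z₀ + (γ : ℂ))) ^ a * ((‖z₀ + (γ : ℂ)‖ : ℂ)) ^ (-2 * s) *
        chi Γ w₀ (γ : ℂ) := by
  have hlattice := ZLattice.summable_norm_add_rpow_of_lt_neg_two Γ z₀
    (r := a - 2 * s.re) (by linarith)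
  have hsub : Summable fun γ : {γ : ℂ // γ ∈ Γ ∧ γ ≠ -z₀} =>
      ‖z₀ + γ‖ ^ ((a : ℝ) - 2 * s.re) :=
    hlattice.comp_injective (i := fun γ : {γ : ℂ // γ ∈ Γ ∧ γ ≠ -z₀} => (⟨γ, γ.2.1⟩ : Γ))
      fun _ _ h => Subtype.ext (congrArg (fun γ : Γ => (γ : ℂ)) h)
  refine Summable.of_norm (hsub.congr fun γ => ?_)
  have hz : z₀ + γ ≠ 0 := fun h => γ.2.2 (eq_neg_of_add_eq_zero_right h)
  rw [norm_mul, norm_chi, mul_one, norm_conj_zpow_mul_ofReal_norm_cpow hz]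
end

section
/- Let K be an imaginary quadratic field with ring of integers O_K, let σ : K ↪ ℂ be a field embedding, let Ω ∈ ℂ be nonzero, and set Γ := Ω·σ(O_K), a lattice in ℂ. Let α ∈ O_K be nonzero, let S ⊂ ℂ be a complete set of representatives of the finite quotient group (σ(α)^{−1}·Γ)/Γ, and let γ ∈ Γ. Then Σ_{z ∈ S} exp((z·conj(γ) − conj(z)·γ)/A(Γ)) equals N(α) := σ(α)·conj(σ(α)) (the absolute norm of α) if γ ∈ conj(σ(α))·Γ, and equals 0 otherwise. -/
/-!
The function `χ_γ(z) = exp (2 i Im (z γ̄) / A)` is an additive character of `ℂ`. Writing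
`Γ = ℤu + ℤv`, the covolume of `Γ` is `|D|` with `D = Im (ū v)`, so `χ_γ(z) = 1` exactly
when `Im (z γ̄) ∈ ℤD`. The pairing `Im (λ μ̄)` takes values in `ℤD` on `Γ × Γ`, and by Cramer's
rule `Γ` is its own dual for it. Hence `χ_γ` is trivial on `Γ` (as `γ ∈ Γ`), and it is trivial
on `σ(α)⁻¹Γ` iff `γ / conj σ(α) ∈ Γ`. Summing a character over representatives of the finite group
`σ(α)⁻¹Γ / Γ` gives its order or `0`, and that order is `[O_K : αO_K] = N(α) = |σ(α)|²`.
-/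

open Complex MeasureTheory NumberField
open scoped ComplexConjugate

/-- The lattice `Γ := Ω·σ(O_K) ⊂ ℂ`. -/
noncomputable def latOf (K : Type*) [Field K] [NumberField K] (σ : K →+* ℂ) (Ω : ℂ) :
    Submodule ℤ ℂ :=
  Submodule.span ℤ (Set.range fun x : 𝓞 K => Ω * σ (algebraMap (𝓞 K) K x))

section CompleteReps

variable {A : Type*} [AddCommGroup A]

def IsCompleteReps (S : Finset A) (H N : AddSubgroup A) : Prop :=
  (∀ z ∈ S, z ∈ H) ∧ ∀ w ∈ H, ∃! z, z ∈ S ∧ w - z ∈ N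

variable {H N : AddSubgroup A} {S : Finset A}

theorem IsCompleteReps.card_eq_relIndex (hS : IsCompleteReps S H N) : S.card = N.relIndex H := by
  let q : S → H ⧸ N.addSubgroupOf H := fun z => ((⟨z, hS.1 z z.2⟩ : H) : H ⧸ N.addSubgroupOf H)
  have hq : Function.Bijective q := by
    refine ⟨fun z z' h => Subtype.ext ?_, fun w => ?_⟩
    · have hzz' : (z : A) - z' ∈ N := by
        have := QuotientAddGroup.eq.1 h
        rw [AddSubgroup.mem_addSubgroupOf] at this
        simpa [sub_eq_neg_add] using neg_mem this
      exact (hS.2 z (hS.1 z z.2)).unique ⟨z.2, by simp⟩ ⟨z'.2, hzz'⟩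
    · obtain ⟨⟨w, hw⟩, rfl⟩ := QuotientAddGroup.mk_surjective w
      obtain ⟨z, ⟨hzS, hwz⟩, -⟩ := hS.2 w hw
      refine ⟨⟨z, hzS⟩, QuotientAddGroup.eq.2 ?_⟩
      rw [AddSubgroup.mem_addSubgroupOf]
      simpa [sub_eq_neg_add] using hwz
  rw [AddSubgroup.relIndex, AddSubgroup.index, ← Nat.card_eq_of_bijective q hq,
    Nat.card_eq_finsetCard]

theorem IsCompleteReps.sum_eq_zero {R : Type*} [CommRing R] [IsDomain R] (hS : IsCompleteReps S H N)
    (ψ : AddChar A R) (hψN : ∀ n ∈ N, ψ n = 1) {w : A} (hwH : w ∈ H) (hw : ψ w ≠ 1) :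
    ∑ z ∈ S, ψ z = 0 := by
  obtain ⟨hSH, hrep⟩ := hS
  choose! r hrS hrN using fun v hv => (hrep v hv).exists
  have hr_eq : ∀ v ∈ H, ∀ z ∈ S, v - z ∈ N → r v = z := fun v hv z hz hvz =>
    (hrep v hv).unique ⟨hrS v hv, hrN v hv⟩ ⟨hz, hvz⟩
  have hψr : ∀ v ∈ H, ψ (r v) = ψ v := fun v hv => by
    rw [← mul_one (ψ (r v)), ← hψN _ (hrN v hv), ← AddChar.map_add_eq_mul, add_sub_cancel]
  refine eq_zero_of_mul_eq_self_left hw ?_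
  calc ψ w * ∑ z ∈ S, ψ z = ∑ z ∈ S, ψ (r (w + z)) := by
        rw [Finset.mul_sum]
        refine Finset.sum_congr rfl fun z hz => ?_
        rw [hψr _ (add_mem hwH (hSH z hz)), AddChar.map_add_eq_mul]
    _ = ∑ z ∈ S, ψ z := by
        refine Finset.sum_nbij' (fun z => r (w + z)) (fun z => r (z - w))
          (fun z hz => hrS _ (add_mem hwH (hSH z hz))) (fun z hz => hrS _ (sub_mem (hSH z hz) hwH))
          (fun z hz => ?_) (fun z hz => ?_) fun _ _ => rfl
        · have hv := add_mem hwH (hSH z hz)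
          refine hr_eq _ (sub_mem (hSH _ (hrS _ hv)) hwH) z hz ?_
          convert neg_mem (hrN _ hv) using 1
          abel
        · have hv := sub_mem (hSH z hz) hwH
          refine hr_eq _ (add_mem hwH (hSH _ (hrS _ hv))) z hz ?_
          convert neg_mem (hrN _ hv) using 1
          abel

end CompleteReps

noncomputable def pairingChar (A : ℝ) (γ : ℂ) : AddChar ℂ ℂ where
  toFun z := exp ((z * conj γ - conj z * γ) / A)
  map_zero_eq_one' := by simp
  map_add_eq_mul' z w := by rw [← exp_add, map_add]; ring_nf

theorem pairingChar_apply_eq_one_iff {A : ℝ} (hA : A ≠ 0) (γ z : ℂ) :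
    pairingChar A γ z = 1 ↔ (z * conj γ).im ∈ AddSubgroup.zmultiples (Real.pi * A) := by
  have hnum : z * conj γ - conj z * γ = 2 * (z * conj γ).im * I := by
    have : conj z * γ = conj (z * conj γ) := by rw [map_mul, conj_conj]
    rw [this, sub_conj]
    push_cast
    ring
  have hA' : (A : ℂ) ≠ 0 := ofReal_ne_zero.2 hA
  simp only [pairingChar, AddChar.coe_mk, hnum, exp_eq_one_iff, AddSubgroup.mem_zmultiples_iff,
    zsmul_eq_mul]
  refine exists_congr fun n => ?_
  rw [div_eq_iff hA', eq_comm, ← ofReal_inj]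
  push_cast
  have h2I : (2 * I : ℂ) ≠ 0 := mul_ne_zero two_ne_zero I_ne_zero
  constructor <;> intro h
  · exact mul_left_cancel₀ h2I (by linear_combination h)
  · linear_combination (2 * I) * h

section SpanPair

open Submodule

variable {u v : ℂ}

/-- Cramer's rule, with `Im (conj u * v)` the determinant of `(u, v)` over `ℝ`. -/
theorem im_conj_mul_mul_eq (c : ℂ) :
    ((conj u * v).im : ℂ) * c = (v * conj c).im * u - (u * conj c).im * v := by
  apply Complex.ext <;>
    simp only [mul_re, mul_im, sub_re, sub_im, ofReal_re, ofReal_im, conj_re, conj_im] <;> ring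

theorem basisOneI_det_pair : Complex.basisOneI.det ![u, v] = (conj u * v).im := by
  rw [Module.Basis.det_apply, Matrix.det_fin_two]
  simp only [Module.Basis.toMatrix_apply, coe_basisOneI_repr, Matrix.cons_val_zero,
    Matrix.cons_val_one, Matrix.cons_val_fin_one, mul_im, conj_re, conj_im]
  ring

theorem im_mul_conj_mem_zmultiples {l m : ℂ} (hl : l ∈ span ℤ {u, v}) (hm : m ∈ span ℤ {u, v}) :
    (l * conj m).im ∈ AddSubgroup.zmultiples (conj u * v).im := by
  obtain ⟨a, b, rfl⟩ := mem_span_pair.1 hl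
  obtain ⟨c, d, rfl⟩ := mem_span_pair.1 hm
  refine AddSubgroup.mem_zmultiples_iff.2 ⟨b * c - a * d, ?_⟩
  simp only [zsmul_eq_mul, map_add, map_mul, map_intCast, mul_re, mul_im, add_re, add_im,
    intCast_re, intCast_im, conj_re, conj_im, Int.cast_sub, Int.cast_mul]
  ring

theorem mem_span_pair_iff_forall_im_mul_conj_mem (hD : (conj u * v).im ≠ 0) {c : ℂ} :
    c ∈ span ℤ {u, v} ↔
      ∀ l ∈ span ℤ {u, v}, (l * conj c).im ∈ AddSubgroup.zmultiples (conj u * v).im := by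
  refine ⟨fun hc l hl => im_mul_conj_mem_zmultiples hl hc, fun h => ?_⟩
  obtain ⟨m, hm⟩ := AddSubgroup.mem_zmultiples_iff.1 (h v (subset_span (by simp)))
  obtain ⟨n, hn⟩ := AddSubgroup.mem_zmultiples_iff.1 (h u (subset_span (by simp)))
  refine mem_span_pair.2 ⟨m, -n, mul_left_cancel₀ (ofReal_ne_zero.2 hD) ?_⟩
  rw [im_conj_mul_mul_eq c, ← hm, ← hn]
  simp only [zsmul_eq_mul, neg_smul, ofReal_mul, ofReal_intCast]
  ring

theorem volume_fundamentalDomain_basisOneI :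
    volume (ZSpan.fundamentalDomain Complex.basisOneI) = 1 := by
  rw [measure_congr (ZSpan.fundamentalDomain_ae_parallelepiped _ volume),
    ← Complex.toBasis_orthonormalBasisOneI, OrthonormalBasis.coe_toBasis,
    OrthonormalBasis.volume_parallelepiped]

theorem latArea_span_pair (hD : (conj u * v).im ≠ 0) :
    latArea (span ℤ {u, v}) = |(conj u * v).im| / Real.pi := by
  obtain ⟨hli, hsp⟩ := (Module.Basis.is_basis_iff_det Complex.basisOneI).2
    (basisOneI_det_pair (u := u) (v := v) ▸ hD.isUnit)
  let b := Module.Basis.mk hli hsp.ge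
  have hb : span ℤ {u, v} = span ℤ (Set.range b) := by
    rw [Module.Basis.coe_mk, Matrix.range_cons_cons_empty]
  rw [latArea, hb, ZLattice.covolume_eq_measure_fundamentalDomain _ _
      (ZSpan.isAddFundamentalDomain b volume), measureReal_def,
    ZSpan.measure_fundamentalDomain b volume Complex.basisOneI,
    volume_fundamentalDomain_basisOneI, mul_one, ENNReal.toReal_ofReal (abs_nonneg _),
    Module.Basis.coe_mk, basisOneI_det_pair]

theorem pairingChar_latArea_span_pair_eq_one_iff (hD : (conj u * v).im ≠ 0) (γ z : ℂ) :
    pairingChar (latArea (span ℤ {u, v})) γ z = 1 ↔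
      (z * conj γ).im ∈ AddSubgroup.zmultiples (conj u * v).im := by
  have hA := latArea_span_pair hD
  rw [pairingChar_apply_eq_one_iff (hA ▸ div_ne_zero (abs_ne_zero.2 hD) Real.pi_ne_zero), hA,
    mul_div_cancel₀ _ Real.pi_ne_zero]
  rcases abs_choice (conj u * v).im with h | h <;> rw [h]
  rw [AddSubgroup.zmultiples_neg]

theorem forall_mul_mem_pairingChar_eq_one_iff (hD : (conj u * v).im ≠ 0) {a : ℂ} (ha : a ≠ 0)
    (γ : ℂ) :
    (∀ w, a * w ∈ span ℤ {u, v} → pairingChar (latArea (span ℤ {u, v})) γ w = 1) ↔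
      γ / conj a ∈ span ℤ {u, v} := by
  rw [mem_span_pair_iff_forall_im_mul_conj_mem hD]
  simp only [pairingChar_latArea_span_pair_eq_one_iff hD]
  have key : ∀ w, w * conj γ = a * w * conj (γ / conj a) := fun w => by
    rw [map_div₀, conj_conj]
    field_simp
  refine ⟨fun h l hl => ?_, fun h w hw => key w ▸ h _ hw⟩
  have hl' : a * (l / a) ∈ span ℤ {u, v} := by rwa [mul_div_cancel₀ _ ha]
  simpa only [key, mul_div_cancel₀ _ ha] using h (l / a) hl'

end SpanPair

section NumberField

open Submodule

variable {K : Type*} [Field K] (σ : K →+* ℂ) (Ω : ℂ)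

def scaledEmbedding : 𝓞 K →ₗ[ℤ] ℂ :=
  LinearMap.mulLeft ℤ Ω ∘ₗ (σ.comp (algebraMap (𝓞 K) K)).toIntAlgHom.toLinearMap

@[simp]
theorem scaledEmbedding_apply (x : 𝓞 K) : scaledEmbedding σ Ω x = Ω * σ x := rfl

variable [NumberField K]

theorem latOf_eq_map : latOf K σ Ω = (⊤ : Submodule ℤ (𝓞 K)).map (scaledEmbedding σ Ω) := by
  rw [Submodule.map_top, ← span_eq (LinearMap.range _), LinearMap.coe_range]
  rfl

theorem mem_latOf {c : ℂ} : c ∈ latOf K σ Ω ↔ ∃ x : 𝓞 K, c = Ω * σ x := by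
  simp [latOf_eq_map, eq_comm]

theorem mem_latOf_div {a w : ℂ} (ha : a ≠ 0) :
    w ∈ latOf K σ (Ω / a) ↔ a * w ∈ latOf K σ Ω := by
  simp only [mem_latOf, div_mul_eq_mul_div, eq_div_iff ha, mul_comm a w]

theorem latOf_eq_span_pair (b : Module.Basis (Fin 2) ℤ (𝓞 K)) :
    latOf K σ Ω = span ℤ {Ω * σ (b 0), Ω * σ (b 1)} := by
  rw [latOf_eq_map, ← b.span_eq, map_span, ← Set.range_comp]
  congr 1
  ext
  simp [Fin.exists_fin_two, eq_comm]

variable {σ} in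
theorem exists_ringOfIntegers_im_ne_zero (him : ∃ x : K, (σ x).im ≠ 0) :
    ∃ x : 𝓞 K, (σ x).im ≠ 0 := by
  by_contra! h
  obtain ⟨x, hx⟩ := him
  have hσ : (starRingEnd ℂ).comp σ = σ :=
    IsFractionRing.ringHom_ext (A := 𝓞 K) fun y => conj_eq_iff_im.2 (h y)
  exact hx (conj_eq_iff_im.1 (RingHom.congr_fun hσ x))

theorem exists_latOf_eq_span_pair (hdeg : Module.finrank ℚ K = 2)
    (him : ∃ x : K, (σ x).im ≠ 0) (hΩ : Ω ≠ 0) :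
    ∃ u v : ℂ, latOf K σ Ω = span ℤ {u, v} ∧ (conj u * v).im ≠ 0 := by
  have hrank : Module.finrank ℤ (𝓞 K) = 2 := by rw [RingOfIntegers.rank, hdeg]
  have hΓ := latOf_eq_span_pair σ Ω (Module.finBasisOfFinrankEq ℤ (𝓞 K) hrank)
  refine ⟨_, _, hΓ, fun hD => ?_⟩
  obtain ⟨x, hx⟩ := exists_ringOfIntegers_im_ne_zero him
  have hmem : ∀ y : 𝓞 K, Ω * σ y ∈ latOf K σ Ω := fun y => (mem_latOf σ Ω).2 ⟨y, rfl⟩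
  rw [hΓ] at hmem
  have h := im_mul_conj_mem_zmultiples (hmem x) (hmem 1)
  rw [hD, AddSubgroup.zmultiples_zero_eq_bot, AddSubgroup.mem_bot] at h
  have h' : (Ω * σ x * conj (Ω * σ 1)).im = normSq Ω * (σ x).im := by
    simp [mul_right_comm _ _ (conj Ω), mul_conj]
  exact hx ((mul_eq_zero.1 (h' ▸ h)).resolve_left (normSq_pos.2 hΩ).ne')

variable {σ} in
theorem algebraMap_norm_eq_mul_conj (hdeg : Module.finrank ℚ K = 2)
    (him : ∃ x : K, (σ x).im ≠ 0) (x : K) :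
    algebraMap ℚ ℂ (Algebra.norm ℚ x) = σ x * conj (σ x) := by
  classical
  let τ₁ : K →ₐ[ℚ] ℂ := σ.toRatAlgHom
  let τ₂ : K →ₐ[ℚ] ℂ := ((starRingEnd ℂ).comp σ).toRatAlgHom
  have hne : τ₁ ≠ τ₂ := fun h => by
    obtain ⟨y, hy⟩ := him
    exact hy (conj_eq_iff_im.1 (DFunLike.congr_fun h y).symm)
  have huniv : Finset.univ = {τ₁, τ₂} :=
    (Finset.eq_univ_of_card _ (by rw [Finset.card_pair hne, AlgHom.card, hdeg])).symm
  rw [Algebra.norm_eq_prod_embeddings, huniv, Finset.prod_pair hne]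
  rfl

variable {σ} in
theorem natAbs_norm_eq_mul_conj (hdeg : Module.finrank ℚ K = 2)
    (him : ∃ x : K, (σ x).im ≠ 0) (α : 𝓞 K) :
    ((Algebra.norm ℤ α).natAbs : ℂ) = σ α * conj (σ α) := by
  have h : ((Algebra.norm ℤ α : ℤ) : ℂ) = σ α * conj (σ α) := by
    rw [← algebraMap_norm_eq_mul_conj hdeg him, ← Algebra.coe_norm_int]
    simp
  have hnn : 0 ≤ Algebra.norm ℤ α := by
    have := congrArg re h
    rw [mul_conj, ofReal_re, intCast_re] at this
    exact_mod_cast this ▸ normSq_nonneg _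
  rw [Nat.cast_natAbs, abs_of_nonneg hnn, h]

theorem relIndex_latOf_div (hΩ : Ω ≠ 0) {α : 𝓞 K} (hα : α ≠ 0) :
    (latOf K σ Ω).toAddSubgroup.relIndex (latOf K σ (Ω / σ α)).toAddSubgroup =
      (Algebra.norm ℤ α).natAbs := by
  have ha : σ α ≠ 0 := by simpa using hα
  have hF : Function.Injective (scaledEmbedding σ (Ω / σ α)) := fun x y h =>
    RingOfIntegers.coe_injective (σ.injective (mul_left_cancel₀ (div_ne_zero hΩ ha) h))
  have hΓ : (latOf K σ Ω).toAddSubgroup =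
      (Ideal.span {α}).toAddSubgroup.map (scaledEmbedding σ (Ω / σ α) : 𝓞 K →+ ℂ) := by
    ext c
    simp only [Submodule.mem_toAddSubgroup, mem_latOf, AddSubgroup.mem_map]
    constructor
    · rintro ⟨x, rfl⟩
      refine ⟨x * α, Ideal.mul_mem_left _ _ (Ideal.mem_span_singleton_self α), ?_⟩
      simp only [AddMonoidHom.coe_coe, scaledEmbedding_apply, map_mul]
      field_simp
    · rintro ⟨y, hy, rfl⟩
      obtain ⟨t, rfl⟩ := Ideal.mem_span_singleton'.1 hy
      refine ⟨t, ?_⟩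
      simp only [AddMonoidHom.coe_coe, scaledEmbedding_apply, map_mul]
      field_simp
  rw [hΓ, latOf_eq_map, Submodule.map_toAddSubgroup, Submodule.top_toAddSubgroup,
    AddSubgroup.relIndex_map_map_of_injective _ _ hF, AddSubgroup.relIndex_top_right,
    ← Ideal.absNorm_span_singleton]
  rfl

end NumberField

open Classical in
/-- Orthogonality of the characters `χ_γ` over a complete set of representatives of
`(σ(α)⁻¹Γ)/Γ` : the sum is `N(α)` if `γ ∈ conj(σ(α))·Γ` and `0` otherwise. -/
theorem sum_char_reps_eq_norm_or_zero
    (K : Type*) [Field K] [NumberField K]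
    (hdeg : Module.finrank ℚ K = 2) (σ : K →+* ℂ) (him : ∃ x : K, (σ x).im ≠ 0)
    (Ω : ℂ) (hΩ : Ω ≠ 0)
    (α : 𝓞 K) (hα : α ≠ 0)
    (S : Finset ℂ)
    (hSmem : ∀ z ∈ S, ∃ x : 𝓞 K,
      σ (algebraMap (𝓞 K) K α) * z = Ω * σ (algebraMap (𝓞 K) K x))
    (hSrep : ∀ w : ℂ, (∃ x : 𝓞 K,
        σ (algebraMap (𝓞 K) K α) * w = Ω * σ (algebraMap (𝓞 K) K x)) →
      ∃! z, z ∈ S ∧ w - z ∈ latOf K σ Ω)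
    (γ : ℂ) (hγ : γ ∈ latOf K σ Ω) :
    ∑ z ∈ S, Complex.exp ((z * conj γ - conj z * γ) / (latArea (latOf K σ Ω) : ℂ)) =
      if ∃ x : 𝓞 K, γ = conj (σ (algebraMap (𝓞 K) K α)) * (Ω * σ (algebraMap (𝓞 K) K x))
      then σ (algebraMap (𝓞 K) K α) * conj (σ (algebraMap (𝓞 K) K α))
      else 0 := by
  set a := σ (algebraMap (𝓞 K) K α)
  have ha : a ≠ 0 := by simpa [a] using hα
  obtain ⟨u, v, hΓ, hD⟩ := exists_latOf_eq_span_pair σ Ω hdeg him hΩ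
  have hS : IsCompleteReps S (latOf K σ (Ω / a)).toAddSubgroup (latOf K σ Ω).toAddSubgroup :=
    ⟨fun z hz => (mem_latOf_div σ Ω ha).2 ((mem_latOf σ Ω).2 (hSmem z hz)),
      fun w hw => hSrep w ((mem_latOf σ Ω).1 ((mem_latOf_div σ Ω ha).1 hw))⟩
  have hχΓ : ∀ l ∈ (latOf K σ Ω).toAddSubgroup, pairingChar (latArea (latOf K σ Ω)) γ l = 1 := by
    rw [hΓ] at hγ ⊢
    exact fun l hl => (pairingChar_latArea_span_pair_eq_one_iff hD γ l).2
      (im_mul_conj_mem_zmultiples hl hγ)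
  have htriv : (∀ w ∈ (latOf K σ (Ω / a)).toAddSubgroup,
      pairingChar (latArea (latOf K σ Ω)) γ w = 1) ↔
        ∃ x : 𝓞 K, γ = conj a * (Ω * σ (algebraMap (𝓞 K) K x)) := by
    simp only [Submodule.mem_toAddSubgroup, mem_latOf_div σ Ω ha]
    rw [hΓ, forall_mul_mem_pairingChar_eq_one_iff hD ha, ← hΓ, mem_latOf]
    refine exists_congr fun x => ?_
    rw [div_eq_iff ((map_ne_zero _).2 ha), mul_comm]
  change ∑ z ∈ S, pairingChar (latArea (latOf K σ Ω)) γ z = _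
  split_ifs with hγa
  · rw [Finset.sum_congr rfl fun z hz => htriv.2 hγa z (hS.1 z hz), Finset.sum_const,
      nsmul_one, hS.card_eq_relIndex, relIndex_latOf_div σ Ω hΩ hα,
      natAbs_norm_eq_mul_conj hdeg him]
  · obtain ⟨w, hw, hχw⟩ := not_forall₂.1 (mt htriv.1 hγa)
    exact hS.sum_eq_zero _ hχΓ hw hχw
end

section
/- Let d > 1 be a natural number, let χ be a primitive Dirichlet character modulo d with values in ℂ, let ζ ∈ ℂ be a primitive d-th root of unity, and set g(χ, ζ) := Σ_{a=0}^{d−1} χ(a)·ζ^a. Then for every integer k ≥ 2, the Dirichlet L-function satisfies L(χ, k) = (g(χ, ζ)/d) · Σ_{a=1}^{d−1} conj(χ(a)) · Li_k(ζ^{−a}), where Li_k(z) := Σ_{n=1}^{∞} z^n/n^k (this series converges absolutely for |z| = 1 and k ≥ 2). -/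
/-!
Write `e(x) = ζ^x` for the additive character of `ZMod d` attached to `ζ`. Since `χ` is
primitive, its finite Fourier transform is `y ↦ χ⁻¹(y) g(χ, e)`, so Fourier inversion expresses
`χ(n)` as `g(χ, e)/d · Σ_a conj(χ(a)) ζ^{-an}`. Dividing by `n^k` and summing over `n` turns each
`Σ_n ζ^{-an}/n^k` into `Li_k(ζ^{-a})`; the interchange is justified by absolute convergence
for `k ≥ 2`.
-/

open scoped ComplexConjugate

noncomputable def Li (k : ℕ) (z : ℂ) : ℂ :=
  ∑' n : ℕ, z ^ (n + 1) / ((n + 1 : ℕ) : ℂ) ^ k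

open Finset

theorem ZMod.sum_univ_eq_sum_range {N : ℕ} [NeZero N] {M : Type*} [AddCommMonoid M]
    (f : ZMod N → M) : ∑ x : ZMod N, f x = ∑ a ∈ range N, f a :=
  sum_nbij' ZMod.val Nat.cast (fun x _ ↦ mem_range.mpr x.val_lt) (fun _ _ ↦ mem_univ _)
    (fun x _ ↦ ZMod.natCast_zmod_val x) (fun _ ha ↦ ZMod.val_cast_of_lt (mem_range.mp ha))
    (fun x _ ↦ by rw [ZMod.natCast_zmod_val])

theorem AddChar.zmodChar_intCast {C : Type*} [DivisionCommMonoid C] {n : ℕ} [NeZero n] {ζ : C}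
    (hζ : ζ ^ n = 1) (j : ℤ) : zmodChar n hζ j = ζ ^ j := by
  have h_one : zmodChar n hζ 1 = ζ := by simpa using zmodChar_apply' hζ 1
  rw [← zsmul_one, map_zsmul_eq_zpow, h_one]

theorem DirichletCharacter.IsPrimitive.gaussSum_mul_sum_inv_mul_addChar {N : ℕ} [NeZero N]
    {R : Type*} [CommRing R] [IsDomain R] {χ : DirichletCharacter R N} (hχ : χ.IsPrimitive)
    {e : AddChar (ZMod N) R} (he : e.IsPrimitive) (m : ZMod N) :
    gaussSum χ e * ∑ y, χ⁻¹ y * e (-(m * y)) = N * χ m := by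
  classical
  calc gaussSum χ e * ∑ y, χ⁻¹ y * e (-(m * y))
      = ∑ y, gaussSum χ (e.mulShift y) * e (-(m * y)) := by
        rw [mul_sum]
        refine sum_congr rfl fun y _ ↦ ?_
        rw [gaussSum_mulShift_of_isPrimitive e hχ]
        ring
    _ = ∑ x, χ x * ∑ y, e (y * (x - m)) := by
        simp only [gaussSum, sum_mul, AddChar.mulShift_apply]
        rw [sum_comm]
        refine sum_congr rfl fun x _ ↦ ?_
        rw [mul_sum]
        refine sum_congr rfl fun y _ ↦ ?_
        rw [mul_assoc, ← AddChar.map_add_eq_mul]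
        ring_nf
    _ = N * χ m := by
        simp [AddChar.sum_mulShift _ he, sub_eq_zero, mul_comm]

theorem summable_pow_div_natCast_pow {z : ℂ} (hz : ‖z‖ ≤ 1) {k : ℕ} (hk : 2 ≤ k) :
    Summable fun n : ℕ ↦ z ^ (n + 1) / ((n + 1 : ℕ) : ℂ) ^ k := by
  have h_dom : Summable fun n : ℕ ↦ 1 / ((n + 1 : ℕ) : ℝ) ^ k := by
    simpa using (summable_nat_add_iff 1).mpr (Real.summable_one_div_nat_pow.mpr hk)
  refine h_dom.of_norm_bounded fun n ↦ ?_
  rw [norm_div, norm_pow, norm_pow, Complex.norm_natCast]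
  gcongr
  exact pow_le_one₀ (norm_nonneg z) hz

theorem tsum_sum_mul_pow_div_eq_sum_mul_Li {ι : Type*} (s : Finset ι) (c z : ι → ℂ)
    (hz : ∀ i ∈ s, ‖z i‖ ≤ 1) {k : ℕ} (hk : 2 ≤ k) :
    ∑' n : ℕ, (∑ i ∈ s, c i * z i ^ (n + 1)) / ((n + 1 : ℕ) : ℂ) ^ k =
      ∑ i ∈ s, c i * Li k (z i) := by
  simp only [Li, ← tsum_mul_left]
  rw [← Summable.tsum_finsetSum fun i hi ↦
    (summable_pow_div_natCast_pow (hz i hi) hk).mul_left _]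
  refine tsum_congr fun n ↦ ?_
  rw [sum_div]
  exact sum_congr rfl fun i _ ↦ mul_div_assoc _ _ _

/-- Coleman's classical formula: for a primitive Dirichlet character `χ` mod `d > 1`,
a primitive `d`-th root of unity `ζ` and `k ≥ 2`,
`L(χ, k) = (g(χ,ζ)/d)·Σ_{a=1}^{d-1} conj(χ(a))·Li_k(ζ^{-a})`. -/
theorem dirichlet_L_eq_gaussSum_mul_sum_polylog
    (d : ℕ) (hd : 1 < d)
    (χ : DirichletCharacter ℂ d) (hχ : χ.IsPrimitive)
    (ζ : ℂ) (hζ : IsPrimitiveRoot ζ d)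
    (k : ℕ) (hk : 2 ≤ k) :
    (∑' n : ℕ, χ ((n + 1 : ℕ) : ZMod d) / ((n + 1 : ℕ) : ℂ) ^ k) =
      ((∑ a ∈ Finset.range d, χ ((a : ℕ) : ZMod d) * ζ ^ a) / (d : ℂ)) *
        ∑ a ∈ Finset.Ico 1 d, conj (χ ((a : ℕ) : ZMod d)) * Li k (ζ ^ (-(a : ℤ))) := by
  have : Fact (1 < d) := ⟨hd⟩
  set e := AddChar.zmodChar d hζ.pow_eq_one
  have h_gauss : ∑ a ∈ range d, χ a * ζ ^ a = gaussSum χ e := by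
    simp [gaussSum, ZMod.sum_univ_eq_sum_range, e, AddChar.zmodChar_apply']
  have h_fourier (m : ℕ) : ∑ a ∈ Ico 1 d, conj (χ a) * (ζ ^ (-(a : ℤ))) ^ m =
      ∑ y, χ⁻¹ y * e (-(m * y)) := by
    rw [ZMod.sum_univ_eq_sum_range, range_eq_Ico, sum_eq_sum_Ico_succ_bot (show 0 < d by omega)]
    -- the `a = 0` term vanishes because `χ⁻¹ 0 = 0` once `d > 1`
    simp only [Nat.cast_zero, MulChar.map_zero, zero_mul, zero_add]
    refine sum_congr rfl fun a _ ↦ ?_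
    rw [← zpow_natCast, ← zpow_mul, ← AddChar.zmodChar_intCast hζ.pow_eq_one,
      ← MulChar.star_apply', starRingEnd_apply]
    push_cast
    congr 2
    ring
  have h_coeff (n : ℕ) : χ (n + 1 : ℕ) = gaussSum χ e / d *
      ∑ a ∈ Ico 1 d, conj (χ a) * (ζ ^ (-(a : ℤ))) ^ (n + 1) := by
    rw [h_fourier, div_mul_eq_mul_div, hχ.gaussSum_mul_sum_inv_mul_addChar
      (AddChar.zmodChar_primitive_of_primitive_root d hζ),
      mul_div_cancel_left₀ _ (Nat.cast_ne_zero.mpr (by omega))]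
  have h_norm (a : ℕ) : ‖ζ ^ (-(a : ℤ))‖ = 1 := by
    rw [norm_zpow, hζ.norm'_eq_one (by omega), one_zpow]
  rw [h_gauss, ← tsum_sum_mul_pow_div_eq_sum_mul_Li _ _ _ (fun a _ ↦ (h_norm a).le) hk,
    ← tsum_mul_left]
  exact tsum_congr fun n ↦ by rw [h_coeff, mul_div_assoc]
end
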